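/- arXiv:2209.04351 — 10 statements merged into one kernel-verified Lean document; each statement's English description precedes it below -/
import Mathlib

section
/- Let T be a 1-dimensional complex triassociative algebra with basis {x} such that x ⊢ x = x. Then x ⊣ x = x and x ⊥ x = x. -/
/-- A triassociative algebra structure on a complex vector space `T`:
three bilinear operations `l` (⊢), `r` (⊣), `m` (⊥) satisfying the
11 Loday–Ronco identities. -/
structure Trias (T : Type*) [AddCommGroup T] [Module ℂ T] where
  l : T →ₗ[ℂ] T →ₗ[ℂ] T
  r : T →ₗ[ℂ] T →ₗ[ℂ] T
  m : T →ₗ[ℂ] T →ₗ[ℂ] T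
  A1 : ∀ x y z, l (l x y) z = l x (l y z)
  A2 : ∀ x y z, r (r x y) z = r x (r y z)
  D1 : ∀ x y z, l (r x y) z = l x (l y z)
  D2 : ∀ x y z, r (r x y) z = r x (l y z)
  S1 : ∀ x y z, r (l x y) z = l x (r y z)
  T1 : ∀ x y z, l (m x y) z = l x (l y z)
  T2 : ∀ x y z, r (r x y) z = r x (m y z)
  T3 : ∀ x y z, m (l x y) z = l x (m y z)
  T4 : ∀ x y z, r (m x y) z = m x (r y z)
  S2 : ∀ x y z, m (r x y) z = m x (l y z)
  A3 : ∀ x y z, m (m x y) z = m x (m y z)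

/-! Writing `x ⊣ x = c • x`, axiom D1 gives `x ⊣ x = c • (x ⊢ x) = (x ⊣ x) ⊢ x = x ⊢ (x ⊢ x) = x`;
likewise `x ⊥ x = d • x` and T2 give `x ⊥ x = d • (x ⊣ x) = x ⊣ (x ⊥ x) = (x ⊣ x) ⊣ x = x`.
In dimension one every product of `x` with itself is a multiple of `x`. -/

namespace Trias

variable {T : Type*} [AddCommGroup T] [Module ℂ T] (A : Trias T) {x : T}

theorem r_self_eq_self (hl : A.l x x = x) (hr : A.r x x ∈ ℂ ∙ x) : A.r x x = x := by
  obtain ⟨c, hc⟩ := Submodule.mem_span_singleton.1 hr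
  calc A.r x x = c • A.l x x := by rw [hl, hc]
    _ = A.l (A.r x x) x := by rw [← hc, map_smul, LinearMap.smul_apply]
    _ = x := by rw [A.D1, hl, hl]

theorem m_self_eq_self (hr : A.r x x = x) (hm : A.m x x ∈ ℂ ∙ x) : A.m x x = x := by
  obtain ⟨d, hd⟩ := Submodule.mem_span_singleton.1 hm
  calc A.m x x = d • A.r x x := by rw [hr, hd]
    _ = A.r (A.r x x) x := by rw [A.T2, ← hd, map_smul, hr]
    _ = x := by rw [hr, hr]

end Trias

theorem Module.Basis.mem_span_singleton_of_unique {K V ι : Type*} [Semiring K] [AddCommMonoid V]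
    [Module K V] [Unique ι] (b : Module.Basis ι K V) (v : V) : v ∈ K ∙ b default := by
  simpa only [Set.range_unique] using b.mem_span v

theorem stmt3 {T : Type*} [AddCommGroup T] [Module ℂ T]
    (b : Module.Basis (Fin 1) ℂ T) (A : Trias T)
    (h : A.l (b 0) (b 0) = b 0) :
    A.r (b 0) (b 0) = b 0 ∧ A.m (b 0) (b 0) = b 0 := by
  have hr := A.r_self_eq_self h (b.mem_span_singleton_of_unique _)
  exact ⟨hr, A.m_self_eq_self hr (b.mem_span_singleton_of_unique _)⟩
end

section
/- Every 1-dimensional complex triassociative algebra is isomorphic to exactly one of: (i) the abelian algebra (all three products zero); (ii) the algebra with x⊢x = x⊣x = 0 and x⊥x = x; (iii) the algebra with x⊢x = x⊣x = x⊥x = x. -/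
/-- `T` has a basis vector `x` with all three products of `x` with itself zero
(i.e. `T ≅ Trias₁¹`, the abelian algebra). -/
def IsTrias11 {T : Type*} [AddCommGroup T] [Module ℂ T] (A : Trias T) : Prop :=
  ∃ x : T, x ≠ 0 ∧ A.l x x = 0 ∧ A.r x x = 0 ∧ A.m x x = 0

/-- `T ≅ Trias₁²`: a basis vector `x` with `x⊢x = x⊣x = 0` and `x⊥x = x`. -/
def IsTrias12 {T : Type*} [AddCommGroup T] [Module ℂ T] (A : Trias T) : Prop :=
  ∃ x : T, x ≠ 0 ∧ A.l x x = 0 ∧ A.r x x = 0 ∧ A.m x x = x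

/-- `T ≅ Trias₁³`: a basis vector `x` with `x⊢x = x⊣x = x⊥x = x`. -/
def IsTrias13 {T : Type*} [AddCommGroup T] [Module ℂ T] (A : Trias T) : Prop :=
  ∃ x : T, x ≠ 0 ∧ A.l x x = x ∧ A.r x x = x ∧ A.m x x = x


/-! With `e ≠ 0` spanning `T` and `e ⊢ e = a e`, `e ⊣ e = b e`, `e ⊥ e = c e`, the identities
`D1`, `D2`, `T1` applied to `(e, e, e)` give `ba = a²`, `b² = ab`, `ca = a²`. So either `a ≠ 0` and
`b = c = a`, and `a⁻¹ e` realises `Trias₁³`; or `a = b = 0`, and `e` or `c⁻¹ e` realises `Trias₁¹`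
or `Trias₁²` according as `c = 0` or not. The three types are mutually exclusive because in
dimension one `(t x) ⊢ (t x) = t² (x ⊢ x)`, so whether `x ⊢ x` (resp. `x ⊥ x`) vanishes does not
depend on the nonzero `x`. -/

section OneDimensional

variable {K V W : Type*} [Field K] [AddCommGroup V] [Module K V] [AddCommGroup W] [Module K W]

theorem LinearMap.apply_smul_smul_self (B : V →ₗ[K] V →ₗ[K] W) (s : K) (x : V) :
    B (s • x) (s • x) = (s * s) • B x x := by
  simp only [map_smul, LinearMap.smul_apply, smul_smul]

theorem LinearMap.apply_inv_smul_inv_smul_self {B : V →ₗ[K] V →ₗ[K] V} {e : V} {c : K}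
    (hc : c ≠ 0) (h : B e e = c • e) : B (c⁻¹ • e) (c⁻¹ • e) = c⁻¹ • e := by
  rw [B.apply_smul_smul_self, h, smul_smul]
  congr 1
  field_simp

theorem LinearMap.self_apply_ne_self_of_finrank_eq_one (hV : Module.finrank K V = 1)
    (B : V →ₗ[K] V →ₗ[K] V) {x y : V} (hx : x ≠ 0) (hBx : B x x = 0) (hy : y ≠ 0) :
    B y y ≠ y := by
  obtain ⟨t, rfl⟩ := (finrank_eq_one_iff_of_nonzero' x hx).mp hV y
  rw [B.apply_smul_smul_self, hBx, smul_zero]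
  exact hy.symm

end OneDimensional

namespace Trias

variable {T : Type*} [AddCommGroup T] [Module ℂ T] (A : Trias T)

theorem structure_constants_rel {e : T} (he : e ≠ 0) {a b c : ℂ} (ha : A.l e e = a • e)
    (hb : A.r e e = b • e) (hc : A.m e e = c • e) :
    b * a = a * a ∧ b * b = a * b ∧ c * a = a * a := by
  have key : ∀ {s t : ℂ}, s • e = t • e → s = t := fun h => smul_left_injective ℂ he h
  have hD1 := A.D1 e e e
  have hD2 := A.D2 e e e
  have hT1 := A.T1 e e e
  simp only [ha, hb, hc, map_smul, LinearMap.smul_apply, smul_smul] at hD1 hD2 hT1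
  exact ⟨key hD1, key hD2, key hT1⟩

theorem isTrias11_or_isTrias12_or_isTrias13 (hT : Module.finrank ℂ T = 1) :
    IsTrias11 A ∨ IsTrias12 A ∨ IsTrias13 A := by
  obtain ⟨e, he, hspan⟩ := finrank_eq_one_iff'.mp hT
  obtain ⟨a, ha⟩ := hspan (A.l e e)
  obtain ⟨b, hb⟩ := hspan (A.r e e)
  obtain ⟨c, hc⟩ := hspan (A.m e e)
  obtain ⟨hba, hbb, hca⟩ := A.structure_constants_rel he ha.symm hb.symm hc.symm
  by_cases ha0 : a = 0
  · have hb0 : b = 0 := by simpa [ha0] using hbb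
    subst ha0 hb0
    by_cases hc0 : c = 0
    · subst hc0
      exact Or.inl ⟨e, he, by simp [← ha], by simp [← hb], by simp [← hc]⟩
    · refine Or.inr (Or.inl ⟨c⁻¹ • e, smul_ne_zero (inv_ne_zero hc0) he, ?_, ?_,
        LinearMap.apply_inv_smul_inv_smul_self hc0 hc.symm⟩) <;>
        simp [← ha, ← hb]
  · rw [mul_right_cancel₀ ha0 hba] at hb
    rw [mul_right_cancel₀ ha0 hca] at hc
    exact Or.inr (Or.inr ⟨a⁻¹ • e, smul_ne_zero (inv_ne_zero ha0) he,
      LinearMap.apply_inv_smul_inv_smul_self ha0 ha.symm,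
      LinearMap.apply_inv_smul_inv_smul_self ha0 hb.symm,
      LinearMap.apply_inv_smul_inv_smul_self ha0 hc.symm⟩)

end Trias

section Exclusive

variable {T : Type*} [AddCommGroup T] [Module ℂ T] {A : Trias T}

theorem IsTrias11.not_isTrias12 (hT : Module.finrank ℂ T = 1) :
    IsTrias11 A → ¬ IsTrias12 A
  | ⟨_, hx, _, _, hmx⟩, ⟨_, hy, _, _, hmy⟩ =>
    A.m.self_apply_ne_self_of_finrank_eq_one hT hx hmx hy hmy

theorem IsTrias11.not_isTrias13 (hT : Module.finrank ℂ T = 1) :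
    IsTrias11 A → ¬ IsTrias13 A
  | ⟨_, hx, hlx, _, _⟩, ⟨_, hy, hly, _, _⟩ =>
    A.l.self_apply_ne_self_of_finrank_eq_one hT hx hlx hy hly

theorem IsTrias12.not_isTrias13 (hT : Module.finrank ℂ T = 1) :
    IsTrias12 A → ¬ IsTrias13 A
  | ⟨_, hx, hlx, _, _⟩, ⟨_, hy, hly, _, _⟩ =>
    A.l.self_apply_ne_self_of_finrank_eq_one hT hx hlx hy hly

end Exclusive

/-- Every 1-dimensional complex triassociative algebra is isomorphic to exactly
one of `Trias₁¹`, `Trias₁²`, `Trias₁³`. -/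
theorem stmt4 {T : Type*} [AddCommGroup T] [Module ℂ T]
    (hdim : Module.finrank ℂ T = 1) (A : Trias T) :
    (IsTrias11 A ∧ ¬ IsTrias12 A ∧ ¬ IsTrias13 A) ∨
    (¬ IsTrias11 A ∧ IsTrias12 A ∧ ¬ IsTrias13 A) ∨
    (¬ IsTrias11 A ∧ ¬ IsTrias12 A ∧ IsTrias13 A) := by
  obtain h11 | h12 | h13 := A.isTrias11_or_isTrias12_or_isTrias13 hdim
  · exact Or.inl ⟨h11, h11.not_isTrias12 hdim, h11.not_isTrias13 hdim⟩
  · exact Or.inr (Or.inl ⟨fun h11 => h11.not_isTrias12 hdim h12, h12, h12.not_isTrias13 hdim⟩)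
  · exact Or.inr (Or.inr ⟨fun h11 => h11.not_isTrias13 hdim h13,
      fun h12 => h12.not_isTrias13 hdim h13, h13⟩)
end

section
/- The seven 2-dimensional complex associative algebras As₂¹ (abelian), As₂² (xx = x), As₂³ (xx = y), As₂⁴ (xx = x, xy = y), As₂⁵ (xx = x, yx = y), As₂⁶ (xx = x, xy = y, yx = y), As₂⁷ (xx = x, yy = y) are pairwise non-isomorphic. -/
/-- The bilinear multiplication on `ℂ²` (basis `x = (1,0)`, `y = (0,1)`)
with `xx = a`, `xy = b`, `yx = c`, `yy = d`. -/
noncomputable def bilin (a b c d : ℂ × ℂ) :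
    (ℂ × ℂ) →ₗ[ℂ] (ℂ × ℂ) →ₗ[ℂ] (ℂ × ℂ) :=
  LinearMap.mk₂ ℂ
    (fun p q => (p.1 * q.1) • a + (p.1 * q.2) • b + (p.2 * q.1) • c + (p.2 * q.2) • d)
    (by intros m₁ m₂ n; simp only [Prod.fst_add, Prod.snd_add]; module)
    (by intros c' m n; simp only [Prod.smul_fst, Prod.smul_snd, smul_eq_mul]; module)
    (by intros m n₁ n₂; simp only [Prod.fst_add, Prod.snd_add]; module)
    (by intros c' m n; simp only [Prod.smul_fst, Prod.smul_snd, smul_eq_mul]; module)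

/-- The seven 2-dimensional complex associative algebras `As₂¹, …, As₂⁷`. -/
noncomputable def As : Fin 7 → ((ℂ × ℂ) →ₗ[ℂ] (ℂ × ℂ) →ₗ[ℂ] (ℂ × ℂ))
  | 0 => bilin 0 0 0 0                          -- abelian
  | 1 => bilin (1,0) 0 0 0                      -- xx = x
  | 2 => bilin (0,1) 0 0 0                      -- xx = y
  | 3 => bilin (1,0) (0,1) 0 0                  -- xx = x, xy = y
  | 4 => bilin (1,0) 0 (0,1) 0                  -- xx = x, yx = y
  | 5 => bilin (1,0) (0,1) (0,1) 0              -- xx = x, xy = y, yx = y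
  | 6 => bilin (1,0) 0 0 (0,1)                  -- xx = x, yy = y

/-- Isomorphism of (not necessarily unital) complex algebras: a linear
bijection preserving multiplication. -/
def AlgebraIso (f g : (ℂ × ℂ) →ₗ[ℂ] (ℂ × ℂ) →ₗ[ℂ] (ℂ × ℂ)) : Prop :=
  ∃ e : (ℂ × ℂ) ≃ₗ[ℂ] (ℂ × ℂ), ∀ a b, e (f a b) = g (e a) (e b)


namespace Stmt7Aux

abbrev V := ℂ × ℂ
abbrev Mul2 := V →ₗ[ℂ] V →ₗ[ℂ] V

/-- mult is zero -/
def P0 (f : Mul2) : Prop := ∀ a b, f a b = 0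
/-- square is at most one-dimensional -/
def P1 (f : Mul2) : Prop := ∃ v : V, ∀ a b, ∃ c : ℂ, f a b = c • v
/-- has a nonzero idempotent -/
def P2 (f : Mul2) : Prop := ∃ z : V, z ≠ 0 ∧ f z z = z
/-- commutative -/
def Pc (f : Mul2) : Prop := ∀ a b, f a b = f b a
/-- has a left identity -/
def Pl (f : Mul2) : Prop := ∃ u : V, ∀ z, f u z = z
/-- has a nonzero square-zero element -/
def Pn (f : Mul2) : Prop := ∃ z : V, z ≠ 0 ∧ f z z = 0

theorem isoSymm {f g : Mul2} (h : AlgebraIso f g) : AlgebraIso g f := by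
  obtain ⟨e, he⟩ := h
  refine ⟨e.symm, fun a b => ?_⟩
  have := he (e.symm a) (e.symm b)
  simp only [e.apply_symm_apply] at this
  rw [← this, e.symm_apply_apply]

theorem t0 {f g : Mul2} (h : AlgebraIso f g) (hf : P0 f) : P0 g := by
  obtain ⟨e, he⟩ := h
  intro a b
  have := he (e.symm a) (e.symm b)
  simp only [e.apply_symm_apply] at this
  rw [← this, hf, map_zero]

theorem t1 {f g : Mul2} (h : AlgebraIso f g) (hf : P1 f) : P1 g := by
  obtain ⟨e, he⟩ := h
  obtain ⟨v, hv⟩ := hf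
  refine ⟨e v, fun a b => ?_⟩
  obtain ⟨c, hc⟩ := hv (e.symm a) (e.symm b)
  have := he (e.symm a) (e.symm b)
  simp only [e.apply_symm_apply] at this
  exact ⟨c, by rw [← this, hc, map_smul]⟩

theorem t2 {f g : Mul2} (h : AlgebraIso f g) (hf : P2 f) : P2 g := by
  obtain ⟨e, he⟩ := h
  obtain ⟨z, hz, hzz⟩ := hf
  exact ⟨e z, by simpa using hz, by rw [← he, hzz]⟩

theorem tc {f g : Mul2} (h : AlgebraIso f g) (hf : Pc f) : Pc g := by
  obtain ⟨e, he⟩ := h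
  intro a b
  have h1 := he (e.symm a) (e.symm b)
  have h2 := he (e.symm b) (e.symm a)
  simp only [e.apply_symm_apply] at h1 h2
  rw [← h1, ← h2, hf]

theorem tl {f g : Mul2} (h : AlgebraIso f g) (hf : Pl f) : Pl g := by
  obtain ⟨e, he⟩ := h
  obtain ⟨u, hu⟩ := hf
  refine ⟨e u, fun z => ?_⟩
  have := he u (e.symm z)
  simp only [e.apply_symm_apply] at this
  rw [← this, hu, e.apply_symm_apply]

theorem tn {f g : Mul2} (h : AlgebraIso f g) (hf : Pn f) : Pn g := by
  obtain ⟨e, he⟩ := h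
  obtain ⟨z, hz, hzz⟩ := hf
  exact ⟨e z, by simpa using hz, by rw [← he, hzz, map_zero]⟩

-- Positive facts
theorem p0_0 : P0 (As 0) := by
  intro a b; show bilin 0 0 0 0 a b = 0; simp [bilin]

theorem p1_1 : P1 (As 1) := by
  refine ⟨(1,0), fun a b => ⟨a.1 * b.1, ?_⟩⟩
  show bilin (1,0) 0 0 0 a b = _; simp [bilin]

theorem p1_2 : P1 (As 2) := by
  refine ⟨(0,1), fun a b => ⟨a.1 * b.1, ?_⟩⟩
  show bilin (0,1) 0 0 0 a b = _; simp [bilin]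

theorem p2_1 : P2 (As 1) := by
  refine ⟨(1,0), by simp [Prod.ext_iff], ?_⟩
  show bilin (1,0) 0 0 0 _ _ = _; simp [bilin]

theorem pl_3 : Pl (As 3) := by
  refine ⟨(1,0), fun z => ?_⟩
  show bilin (1,0) (0,1) 0 0 _ _ = _
  simp [bilin, Prod.ext_iff]

theorem pc_5 : Pc (As 5) := by
  intro a b
  show bilin (1,0) (0,1) (0,1) 0 a b = bilin (1,0) (0,1) (0,1) 0 b a
  simp [bilin, Prod.ext_iff]; ring_nf; simp [mul_comm]

theorem pc_6 : Pc (As 6) := by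
  intro a b
  show bilin (1,0) 0 0 (0,1) a b = bilin (1,0) 0 0 (0,1) b a
  simp [bilin, Prod.ext_iff, mul_comm]

theorem pn_5 : Pn (As 5) := by
  refine ⟨(0,1), by simp [Prod.ext_iff], ?_⟩
  show bilin (1,0) (0,1) (0,1) 0 _ _ = _; simp [bilin]

-- Negative facts
theorem n0 {j : Fin 7} (h : As j ((1:ℂ),(0:ℂ)) ((1:ℂ),(0:ℂ)) ≠ 0) : ¬ P0 (As j) :=
  fun hp => h (hp _ _)

theorem xx1 : As 1 ((1:ℂ),(0:ℂ)) ((1:ℂ),(0:ℂ)) ≠ 0 := by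
  show bilin (1,0) 0 0 0 _ _ ≠ 0; simp [bilin, Prod.ext_iff]
theorem xx2 : As 2 ((1:ℂ),(0:ℂ)) ((1:ℂ),(0:ℂ)) ≠ 0 := by
  show bilin (0,1) 0 0 0 _ _ ≠ 0; simp [bilin, Prod.ext_iff]
theorem xx3 : As 3 ((1:ℂ),(0:ℂ)) ((1:ℂ),(0:ℂ)) ≠ 0 := by
  show bilin (1,0) (0,1) 0 0 _ _ ≠ 0; simp [bilin, Prod.ext_iff]
theorem xx4 : As 4 ((1:ℂ),(0:ℂ)) ((1:ℂ),(0:ℂ)) ≠ 0 := by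
  show bilin (1,0) 0 (0,1) 0 _ _ ≠ 0; simp [bilin, Prod.ext_iff]
theorem xx5 : As 5 ((1:ℂ),(0:ℂ)) ((1:ℂ),(0:ℂ)) ≠ 0 := by
  show bilin (1,0) (0,1) (0,1) 0 _ _ ≠ 0; simp [bilin, Prod.ext_iff]
theorem xx6 : As 6 ((1:ℂ),(0:ℂ)) ((1:ℂ),(0:ℂ)) ≠ 0 := by
  show bilin (1,0) 0 0 (0,1) _ _ ≠ 0; simp [bilin, Prod.ext_iff]

theorem n1 {f : Mul2} (u₂ w₂ : V) (h1 : f (1,0) (1,0) = ((1:ℂ),(0:ℂ)))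
    (h2 : f u₂ w₂ = ((0:ℂ),(1:ℂ))) : ¬ P1 f := by
  rintro ⟨v, hv⟩
  obtain ⟨c, hc⟩ := hv (1,0) (1,0)
  obtain ⟨d, hd⟩ := hv u₂ w₂
  rw [h1] at hc; rw [h2] at hd
  rw [Prod.ext_iff] at hc hd
  simp only [Prod.smul_fst, Prod.smul_snd, smul_eq_mul] at hc hd
  rcases mul_eq_zero.mp hd.1.symm with h | h
  · rw [h] at hd; simp at hd
  · rw [h] at hc; simp at hc

theorem np1_3 : ¬ P1 (As 3) := by
  refine n1 (1,0) (0,1) ?_ ?_ <;>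
    (show bilin (1,0) (0,1) 0 0 _ _ = _; simp [bilin])
theorem np1_4 : ¬ P1 (As 4) := by
  refine n1 (0,1) (1,0) ?_ ?_ <;>
    (show bilin (1,0) 0 (0,1) 0 _ _ = _; simp [bilin])
theorem np1_5 : ¬ P1 (As 5) := by
  refine n1 (1,0) (0,1) ?_ ?_ <;>
    (show bilin (1,0) (0,1) (0,1) 0 _ _ = _; simp [bilin])
theorem np1_6 : ¬ P1 (As 6) := by
  refine n1 (0,1) (0,1) ?_ ?_ <;>
    (show bilin (1,0) 0 0 (0,1) _ _ = _; simp [bilin])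

theorem np2_2 : ¬ P2 (As 2) := by
  rintro ⟨z, hz, h⟩
  have : bilin (0,1) 0 0 0 z z = z := h
  simp [bilin, Prod.ext_iff] at this
  obtain ⟨h1, h2⟩ := this
  have hz1 : z.1 = 0 := h1.symm
  have hz2 : z.2 = 0 := by rw [← h2, hz1, mul_zero]
  apply hz
  rw [Prod.ext_iff]
  exact ⟨hz1, hz2⟩

theorem npc_3 : ¬ Pc (As 3) := by
  intro h
  have := h (1,0) (0,1)
  have h2 : bilin (1,0) (0,1) 0 0 ((1:ℂ),(0:ℂ)) ((0:ℂ),(1:ℂ))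
      = bilin (1,0) (0,1) 0 0 ((0:ℂ),(1:ℂ)) ((1:ℂ),(0:ℂ)) := this
  simp [bilin, Prod.ext_iff] at h2

theorem npc_4 : ¬ Pc (As 4) := by
  intro h
  have := h (1,0) (0,1)
  have h2 : bilin (1,0) 0 (0,1) 0 ((1:ℂ),(0:ℂ)) ((0:ℂ),(1:ℂ))
      = bilin (1,0) 0 (0,1) 0 ((0:ℂ),(1:ℂ)) ((1:ℂ),(0:ℂ)) := this
  simp [bilin, Prod.ext_iff] at h2

theorem npl_4 : ¬ Pl (As 4) := by
  rintro ⟨u, hu⟩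
  have := hu (0,1)
  have h2 : bilin (1,0) 0 (0,1) 0 u ((0:ℂ),(1:ℂ)) = ((0:ℂ),(1:ℂ)) := this
  simp [bilin, Prod.ext_iff] at h2

theorem npn_6 : ¬ Pn (As 6) := by
  rintro ⟨z, hz, h⟩
  have h2 : bilin (1,0) 0 0 (0,1) z z = 0 := h
  simp [bilin, Prod.ext_iff] at h2
  exact hz (Prod.ext h2.1 h2.2)

end Stmt7Aux

open Stmt7Aux in
/-- `As₂¹, …, As₂⁷` are pairwise non-isomorphic. -/
theorem stmt7 : ∀ i j : Fin 7, i ≠ j → ¬ AlgebraIso (As i) (As j) := by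
  intro i j hij hiso
  fin_cases i <;> fin_cases j
  · exact absurd rfl hij
  · exact n0 xx1 (t0 hiso p0_0)
  · exact n0 xx2 (t0 hiso p0_0)
  · exact n0 xx3 (t0 hiso p0_0)
  · exact n0 xx4 (t0 hiso p0_0)
  · exact n0 xx5 (t0 hiso p0_0)
  · exact n0 xx6 (t0 hiso p0_0)
  · exact n0 xx1 (t0 (isoSymm hiso) p0_0)
  · exact absurd rfl hij
  · exact np2_2 (t2 hiso p2_1)
  · exact np1_3 (t1 hiso p1_1)
  · exact np1_4 (t1 hiso p1_1)
  · exact np1_5 (t1 hiso p1_1)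
  · exact np1_6 (t1 hiso p1_1)
  · exact n0 xx2 (t0 (isoSymm hiso) p0_0)
  · exact np2_2 (t2 (isoSymm hiso) p2_1)
  · exact absurd rfl hij
  · exact np1_3 (t1 hiso p1_2)
  · exact np1_4 (t1 hiso p1_2)
  · exact np1_5 (t1 hiso p1_2)
  · exact np1_6 (t1 hiso p1_2)
  · exact n0 xx3 (t0 (isoSymm hiso) p0_0)
  · exact np1_3 (t1 (isoSymm hiso) p1_1)
  · exact np1_3 (t1 (isoSymm hiso) p1_2)
  · exact absurd rfl hij
  · exact npl_4 (tl hiso pl_3)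
  · exact npc_3 (tc (isoSymm hiso) pc_5)
  · exact npc_3 (tc (isoSymm hiso) pc_6)
  · exact n0 xx4 (t0 (isoSymm hiso) p0_0)
  · exact np1_4 (t1 (isoSymm hiso) p1_1)
  · exact np1_4 (t1 (isoSymm hiso) p1_2)
  · exact npl_4 (tl (isoSymm hiso) pl_3)
  · exact absurd rfl hij
  · exact npc_4 (tc (isoSymm hiso) pc_5)
  · exact npc_4 (tc (isoSymm hiso) pc_6)
  · exact n0 xx5 (t0 (isoSymm hiso) p0_0)
  · exact np1_5 (t1 (isoSymm hiso) p1_1)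
  · exact np1_5 (t1 (isoSymm hiso) p1_2)
  · exact npc_3 (tc hiso pc_5)
  · exact npc_4 (tc hiso pc_5)
  · exact absurd rfl hij
  · exact npn_6 (tn hiso pn_5)
  · exact n0 xx6 (t0 (isoSymm hiso) p0_0)
  · exact np1_6 (t1 (isoSymm hiso) p1_1)
  · exact np1_6 (t1 (isoSymm hiso) p1_2)
  · exact npc_3 (tc hiso pc_6)
  · exact npc_4 (tc hiso pc_6)
  · exact npn_6 (tn (isoSymm hiso) pn_5)
  · exact absurd rfl hij
end

section
/- For each α ∈ ℂ, the structure on ℂ² with basis {x,y} defined by x⊢x = x, x⊣x = x, x⊥x = x, y⊥y = αy (all other basis products zero) is a triassociative algebra. -/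
noncomputable def lop : (ℂ × ℂ) →ₗ[ℂ] (ℂ × ℂ) →ₗ[ℂ] (ℂ × ℂ) :=
  LinearMap.mk₂ ℂ (fun a b => (a.1 * b.1, 0))
    (fun a a' b => by simp [add_mul])
    (fun c a b => by simp [mul_assoc])
    (fun a b b' => by simp [mul_add])
    (fun c a b => by simp; ring)

noncomputable def mop (α : ℂ) : (ℂ × ℂ) →ₗ[ℂ] (ℂ × ℂ) →ₗ[ℂ] (ℂ × ℂ) :=
  LinearMap.mk₂ ℂ (fun a b => (a.1 * b.1, α * a.2 * b.2))
    (fun a a' b => by simp [Prod.ext_iff]; ring_nf; simp)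
    (fun c a b => by simp [Prod.ext_iff]; ring_nf; simp)
    (fun a b b' => by simp [Prod.ext_iff]; ring_nf; simp)
    (fun c a b => by simp [Prod.ext_iff]; ring_nf; simp)

/-- For each `α ∈ ℂ`, the structure on `ℂ²` with basis `x = (1,0)`,
`y = (0,1)` given by `x⊢x = x`, `x⊣x = x`, `x⊥x = x`, `y⊥y = α•y`
(all other basis products zero) is a triassociative algebra (`Trias₂²⁷`). -/
theorem stmt9 (α : ℂ) :
    ∃ A : Trias (ℂ × ℂ),
      A.l (1,0) (1,0) = (1,0) ∧ A.l (1,0) (0,1) = 0 ∧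
      A.l (0,1) (1,0) = 0 ∧ A.l (0,1) (0,1) = 0 ∧
      A.r (1,0) (1,0) = (1,0) ∧ A.r (1,0) (0,1) = 0 ∧
      A.r (0,1) (1,0) = 0 ∧ A.r (0,1) (0,1) = 0 ∧
      A.m (1,0) (1,0) = (1,0) ∧ A.m (1,0) (0,1) = 0 ∧
      A.m (0,1) (1,0) = 0 ∧ A.m (0,1) (0,1) = α • ((0 : ℂ), (1 : ℂ)) := by
  refine ⟨⟨lop, lop, mop α, ?_, ?_, ?_, ?_, ?_, ?_, ?_, ?_, ?_, ?_, ?_⟩, ?_⟩ <;>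
    first
    | (intro x y z; simp [lop, mop]; ring_nf; try simp [mul_assoc])
    | (refine ⟨?_, ?_, ?_, ?_, ?_, ?_, ?_, ?_, ?_, ?_, ?_, ?_⟩ <;>
        simp [lop, mop, Prod.ext_iff])
end

section
/- Let T be a 2-dimensional complex triassociative algebra with basis {x, y} in which x ⊢ x = x and all other ⊢-products of basis elements are zero. Then x ⊣ x = x, x ⊣ y = 0, y ⊣ y = 0, and y ⊣ x = α₆ y with α₆ ∈ {0, 1}. -/
/-!
Write `u₀` for the `x`-coordinate of `u`. The hypotheses say exactly that `u ⊢ v = u₀ v₀ x`, so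
`x ⊢ -` and `- ⊢ x` agree and `y ⊢ -` vanishes. Since `x` is a `⊢`-idempotent, S1 and D1 give
`x ⊣ z = x ⊢ (x ⊣ z) = (x ⊣ z) ⊢ x = x ⊢ (z ⊢ x) = z₀ x`. By D1, `(y ⊣ z) ⊢ x = y ⊢ (z ⊢ x) = 0`,
so `y ⊣ z` is a multiple `c_z y` of `y`, and D2, `(y ⊣ z) ⊣ w = y ⊣ (z ⊢ w)`, turns into
`c_y² = 0` for `z = w = y` and `c_x² = c_x` for `z = w = x`.
-/

namespace Trias

variable {T : Type*} [AddCommGroup T] [Module ℂ T] (A : Trias T)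

theorem r_eq_l_l_of_idem_of_comm {e : T} (he : A.l e e = e) (hc : ∀ w, A.l e w = A.l w e)
    (z : T) : A.r e z = A.l e (A.l z e) :=
  calc A.r e z = A.r (A.l e e) z := by rw [he]
    _ = A.l e (A.r e z) := A.S1 e e z
    _ = A.l (A.r e z) e := hc _
    _ = A.l e (A.l z e) := A.D1 e z e

section Basis

variable (b : Module.Basis (Fin 2) ℂ T)

theorem _root_.Module.Basis.eq_smul_one_of_repr_zero_eq_zero {v : T} (hv : b.repr v 0 = 0) :
    v = b.repr v 1 • b 1 := by
  have h := b.sum_repr v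
  rwa [Fin.sum_univ_two, hv, zero_smul, zero_add, eq_comm] at h

variable {A b}

theorem l_eq_repr_mul_repr_smul (h1 : A.l (b 0) (b 0) = b 0) (h2 : A.l (b 0) (b 1) = 0)
    (h3 : A.l (b 1) (b 0) = 0) (h4 : A.l (b 1) (b 1) = 0) (u v : T) :
    A.l u v = (b.repr u 0 * b.repr v 0) • b 0 := by
  conv_lhs => rw [← b.sum_repr u, ← b.sum_repr v]
  simp only [Fin.sum_univ_two, map_add, map_smul, LinearMap.add_apply, LinearMap.smul_apply,
    h1, h2, h3, h4, smul_zero, add_zero, smul_smul, mul_comm]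

variable (hl : ∀ u v, A.l u v = (b.repr u 0 * b.repr v 0) • b 0)
include hl

theorem r_basis_zero_eq (z : T) : A.r (b 0) z = b.repr z 0 • b 0 := by
  rw [A.r_eq_l_l_of_idem_of_comm (by simp [hl]) (fun w => by simp [hl, mul_comm])]
  simp [hl]

theorem r_basis_one_eq_smul (z : T) : A.r (b 1) z = b.repr (A.r (b 1) z) 1 • b 1 := by
  refine b.eq_smul_one_of_repr_zero_eq_zero ?_
  have h : A.l (A.r (b 1) z) (b 0) = 0 := by simp [A.D1, hl]
  simpa [hl, b.ne_zero 0] using h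

theorem repr_r_basis_one_mul_repr_r_basis_one (z w : T) :
    b.repr (A.r (b 1) z) 1 * b.repr (A.r (b 1) w) 1 =
      b.repr z 0 * b.repr w 0 * b.repr (A.r (b 1) (b 0)) 1 := by
  refine smul_left_injective ℂ (b.ne_zero 1) ?_
  calc (b.repr (A.r (b 1) z) 1 * b.repr (A.r (b 1) w) 1) • b 1
      = b.repr (A.r (b 1) z) 1 • A.r (b 1) w := by rw [mul_smul, ← r_basis_one_eq_smul hl]
    _ = A.r (A.r (b 1) z) w := by
      conv_rhs => rw [r_basis_one_eq_smul hl z]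
      rw [map_smul, LinearMap.smul_apply]
    _ = A.r (b 1) (A.l z w) := A.D2 _ _ _
    _ = (b.repr z 0 * b.repr w 0) • A.r (b 1) (b 0) := by rw [hl, map_smul]
    _ = (b.repr z 0 * b.repr w 0 * b.repr (A.r (b 1) (b 0)) 1) • b 1 := by
      rw [mul_smul _ (b.repr _ 1), ← r_basis_one_eq_smul hl]

end Basis

end Trias

/-- In a 2-dimensional complex triassociative algebra with basis `{x, y}`
where `x⊢x = x` and all other `⊢`-products of basis elements vanish, one has
`x⊣x = x`, `x⊣y = 0`, `y⊣y = 0`, and `y⊣x = α₆y` with `α₆ ∈ {0, 1}`. -/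
theorem stmt11 {T : Type*} [AddCommGroup T] [Module ℂ T]
    (b : Module.Basis (Fin 2) ℂ T) (A : Trias T)
    (x : T) (y : T) (hx : x = b 0) (hy : y = b 1)
    (h1 : A.l x x = x) (h2 : A.l x y = 0) (h3 : A.l y x = 0) (h4 : A.l y y = 0) :
    A.r x x = x ∧ A.r x y = 0 ∧ A.r y y = 0 ∧
    ∃ α₆ : ℂ, (α₆ = 0 ∨ α₆ = 1) ∧ A.r y x = α₆ • y := by
  subst hx hy
  have hl := Trias.l_eq_repr_mul_repr_smul h1 h2 h3 h4
  have hyy := Trias.repr_r_basis_one_mul_repr_r_basis_one hl (b 1) (b 1)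
  have hxx := Trias.repr_r_basis_one_mul_repr_r_basis_one hl (b 0) (b 0)
  simp only [b.repr_self, ne_eq, zero_ne_one, not_false_eq_true, Finsupp.single_eq_of_ne,
    Finsupp.single_eq_same, mul_zero, mul_one, zero_mul, one_mul, mul_self_eq_zero] at hyy hxx
  refine ⟨by simpa using Trias.r_basis_zero_eq hl (b 0),
    by simpa using Trias.r_basis_zero_eq hl (b 1), ?_,
    _, IsIdempotentElem.iff_eq_zero_or_one.mp hxx, Trias.r_basis_one_eq_smul hl (b 0)⟩
  rw [Trias.r_basis_one_eq_smul hl, hyy, zero_smul]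
end

section
/- Let T be a 2-dimensional complex triassociative algebra with basis {x, y} such that x ⊢ x = x, all other ⊢-products of basis elements are zero, and y ⊣ x = 0 (with x⊣x = x, x⊣y = y⊣y = 0). Then x ⊥ x = x, x ⊥ y = 0, y ⊥ x = 0, and y ⊥ y = β y for some β ∈ ℂ; i.e., T is isomorphic to Trias₂²⁷. -/
/-!
Left `⊢`-multiplication by `x` and right `⊣`-multiplication by `x` both act as the projection
`t ↦ t₀ • x` onto the `x`-line along `y`. The identities T3 and T4 then say that `x ⊥ t` and
`t ⊥ x` are fixed by this projection, while `y ⊥ t` and `x ⊥ y` are killed by it; this leaves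
only `x ⊥ x = c • x` and `y ⊥ y ∈ ℂ y`, and T2 (`x = x ⊣ (x ⊥ x)`) forces `c = 1`.
-/

namespace Module.Basis

variable {ι R M : Type*} [Semiring R] [AddCommMonoid M] [Module R M]

theorem apply_eq_coord_smul_of_apply_eq (b : Basis ι R M) {f : M →ₗ[R] M} {i : ι}
    (hi : f (b i) = b i) (hj : ∀ j ≠ i, f (b j) = 0) (t : M) :
    f t = b.coord i t • b i := by
  have hf : f = (b.coord i).smulRight (b i) := by
    refine b.ext fun j => ?_
    by_cases hji : j = i
    · subst hji
      simp [hi]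
    · simp [hj j hji, Finsupp.single_eq_of_ne (Ne.symm hji)]
  rw [hf, LinearMap.smulRight_apply]

theorem eq_coord_one_smul_of_coord_zero_eq_zero (b : Basis (Fin 2) R M) {t : M}
    (ht : b.coord 0 t = 0) : t = b.coord 1 t • b 1 := by
  conv_lhs => rw [← b.sum_repr t]
  rw [Fin.sum_univ_two, ← b.coord_apply, ht, zero_smul, zero_add, b.coord_apply]

end Module.Basis

theorem stmt12_general {T : Type*} [AddCommGroup T] [Module ℂ T]
    (b : Module.Basis (Fin 2) ℂ T) (A : Trias T)
    (x : T) (y : T) (hx : x = b 0) (hy : y = b 1)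
    (h1 : A.l x x = x) (h2 : A.l x y = 0)
    (h5 : A.r x x = x) (h7 : A.r y x = 0) :
    A.m x x = x ∧ A.m x y = 0 ∧ A.m y x = 0 ∧ ∃ β : ℂ, A.m y y = β • y := by
  subst hx hy
  have hl (t : T) : A.l (b 0) t = b.coord 0 t • b 0 :=
    b.apply_eq_coord_smul_of_apply_eq h1 (fun j hj => Fin.eq_one_of_ne_zero j hj ▸ h2) t
  have hr (t : T) : A.r t (b 0) = b.coord 0 t • b 0 :=
    b.apply_eq_coord_smul_of_apply_eq (f := A.r.flip (b 0)) h5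
      (fun j hj => Fin.eq_one_of_ne_zero j hj ▸ h7) t
  have hxz (z : T) : A.m (b 0) z = b.coord 0 (A.m (b 0) z) • b 0 := by
    rw [← hl, ← A.T3, h1]
  have hzx (z : T) : A.m z (b 0) = b.coord 0 (A.m z (b 0)) • b 0 := by
    rw [← hr, A.T4, h5]
  have hyz (z : T) : b.coord 0 (A.m (b 1) z) = 0 := by
    have h := A.T3 (b 0) (b 1) z
    rw [h2, map_zero, LinearMap.zero_apply, hl, eq_comm, smul_eq_zero] at h
    exact h.resolve_right (b.ne_zero 0)
  have hxy : b.coord 0 (A.m (b 0) (b 1)) • b 0 = 0 := by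
    rw [← hr, A.T4, h7, map_zero]
  refine ⟨?_, by rw [hxz, hxy], by rw [hzx, hyz, zero_smul],
    b.coord 1 _, b.eq_coord_one_smul_of_coord_zero_eq_zero (hyz _)⟩
  calc A.m (b 0) (b 0) = b.coord 0 (A.m (b 0) (b 0)) • A.r (b 0) (b 0) := by rw [h5, ← hxz]
    _ = A.r (b 0) (A.m (b 0) (b 0)) := by rw [← map_smul, ← hxz]
    _ = b 0 := by rw [← A.T2, h5, h5]

/-- In a 2-dimensional complex triassociative algebra with basis `{x, y}`
where `x⊢x = x`, all other `⊢`-products of basis elements vanish,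
`x⊣x = x`, and `x⊣y = y⊣x = y⊣y = 0`, one has `x⊥x = x`, `x⊥y = 0`,
`y⊥x = 0`, `y⊥y = βy` for some `β ∈ ℂ` (so `T ≅ Trias₂²⁷`). -/
theorem stmt12 {T : Type*} [AddCommGroup T] [Module ℂ T]
    (b : Module.Basis (Fin 2) ℂ T) (A : Trias T)
    (x : T) (y : T) (hx : x = b 0) (hy : y = b 1)
    (h1 : A.l x x = x) (h2 : A.l x y = 0) (h3 : A.l y x = 0) (h4 : A.l y y = 0)
    (h5 : A.r x x = x) (h6 : A.r x y = 0) (h7 : A.r y x = 0) (h8 : A.r y y = 0) :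
    A.m x x = x ∧ A.m x y = 0 ∧ A.m y x = 0 ∧ ∃ β : ℂ, A.m y y = β • y :=
  stmt12_general b A x y hx hy h1 h2 h5 h7
end

section
/- Every 2-dimensional complex triassociative algebra whose ⊢-operation satisfies x⊢x = x and all other basis ⊢-products are zero (for some basis {x,y}) is isomorphic to one of Trias₂²⁵, Trias₂²⁶, or Trias₂²⁷ (for some α ∈ ℂ). -/
/-! Let `φ` be the first coordinate, so that the hypothesis reads `u ⊢ v = φ(u) φ(v) x`.
Evaluating `(u ⊣ v) ⊢ x` and `(u ⊥ v) ⊢ x` in two ways shows that `φ` is multiplicative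
for `⊣` and `⊥`; evaluating `(x ⊢ x) ⊣ v` and `(x ⊢ x) ⊥ v` gives `x ⊣ v = x ⊥ v = φ(v) x`.
Hence `y ⊣ v` and `y ⊥ v` lie in `ℂ y`, and the four remaining structure constants
`y ⊣ x = f y`, `y ⊣ y = g y`, `y ⊥ x = p y`, `y ⊥ y = q y` satisfy `f² = f`, `g² = 0`,
`p² = p`, `p f = p` and `f q = 0`, which leaves exactly the three listed algebras. -/

namespace Module.Basis

variable {T : Type*} [AddCommGroup T] [Module ℂ T] (b : Module.Basis (Fin 2) ℂ T)

theorem eq_coord_smul_add_coord_smul (u : T) : u = b.coord 0 u • b 0 + b.coord 1 u • b 1 := by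
  rw [b.coord_apply, b.coord_apply, ← Fin.sum_univ_two (fun i => b.repr u i • b i), b.sum_repr]

theorem eq_coord_one_smul_of_coord_zero {w : T} (hw : b.coord 0 w = 0) :
    w = b.coord 1 w • b 1 := by
  rw [b.eq_coord_smul_add_coord_smul w, hw, zero_smul, zero_add]
  simp

end Module.Basis

namespace Trias

variable {T : Type*} [AddCommGroup T] [Module ℂ T] (A : Trias T)

section RankOneLeft

variable {φ : T →ₗ[ℂ] ℂ} {e : T} (hl : ∀ u v, A.l u v = (φ u * φ v) • e)
  (he : φ e = 1)
include hl he

theorem map_r_of_l_eq_smul (u v : T) : φ (A.r u v) = φ u * φ v := by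
  simpa [hl, he] using congrArg φ (A.D1 u v e)

theorem map_m_of_l_eq_smul (u v : T) : φ (A.m u v) = φ u * φ v := by
  simpa [hl, he] using congrArg φ (A.T1 u v e)

theorem r_left_of_l_eq_smul (v : T) : A.r e v = φ v • e := by
  simpa [hl, he, A.map_r_of_l_eq_smul hl he] using A.S1 e e v

theorem m_left_of_l_eq_smul (v : T) : A.m e v = φ v • e := by
  simpa [hl, he, A.map_m_of_l_eq_smul hl he] using A.T3 e e v

end RankOneLeft

section FinTwo

variable (b : Module.Basis (Fin 2) ℂ T)

theorem l_eq_coord_mul_coord_smul (h1 : A.l (b 0) (b 0) = b 0) (h2 : A.l (b 0) (b 1) = 0)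
    (h3 : A.l (b 1) (b 0) = 0) (h4 : A.l (b 1) (b 1) = 0) (u v : T) :
    A.l u v = (b.coord 0 u * b.coord 0 v) • b 0 := by
  rw [b.eq_coord_smul_add_coord_smul u, b.eq_coord_smul_add_coord_smul v]
  simp [h1, h2, h3, h4, smul_smul]

variable {A b} (hl : ∀ u v, A.l u v = (b.coord 0 u * b.coord 0 v) • b 0)
include hl

theorem r_basis_zero (v : T) : A.r (b 0) v = b.coord 0 v • b 0 :=
  A.r_left_of_l_eq_smul hl (by simp) v

theorem m_basis_zero (v : T) : A.m (b 0) v = b.coord 0 v • b 0 :=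
  A.m_left_of_l_eq_smul hl (by simp) v

theorem exists_r_basis_one_eq_smul (v : T) : ∃ c : ℂ, A.r (b 1) v = c • b 1 :=
  ⟨_, b.eq_coord_one_smul_of_coord_zero (by simp [A.map_r_of_l_eq_smul hl (by simp)])⟩

theorem exists_m_basis_one_eq_smul (v : T) : ∃ c : ℂ, A.m (b 1) v = c • b 1 :=
  ⟨_, b.eq_coord_one_smul_of_coord_zero (by simp [A.map_m_of_l_eq_smul hl (by simp)])⟩

end FinTwo

end Trias

/-- Every 2-dimensional complex triassociative algebra whose `⊢`-operation
satisfies `x⊢x = x` with all other basis `⊢`-products zero is isomorphic to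
one of `Trias₂²⁵`, `Trias₂²⁶`, or `Trias₂²⁷` (for some `α ∈ ℂ`). -/
theorem stmt14 {T : Type*} [AddCommGroup T] [Module ℂ T]
    (b : Module.Basis (Fin 2) ℂ T) (A : Trias T)
    (x : T) (y : T) (hx : x = b 0) (hy : y = b 1)
    (h1 : A.l x x = x) (h2 : A.l x y = 0) (h3 : A.l y x = 0) (h4 : A.l y y = 0) :
    -- Trias₂²⁵ : x⊣x = x, y⊣x = y, x⊥x = x, y⊥x = y
    (A.r x x = x ∧ A.r x y = 0 ∧ A.r y x = y ∧ A.r y y = 0 ∧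
      A.m x x = x ∧ A.m x y = 0 ∧ A.m y x = y ∧ A.m y y = 0) ∨
    -- Trias₂²⁶ : x⊣x = x, y⊣x = y, x⊥x = x
    (A.r x x = x ∧ A.r x y = 0 ∧ A.r y x = y ∧ A.r y y = 0 ∧
      A.m x x = x ∧ A.m x y = 0 ∧ A.m y x = 0 ∧ A.m y y = 0) ∨
    -- Trias₂²⁷ : x⊣x = x, x⊥x = x, y⊥y = αy
    (∃ α : ℂ, A.r x x = x ∧ A.r x y = 0 ∧ A.r y x = 0 ∧ A.r y y = 0 ∧
      A.m x x = x ∧ A.m x y = 0 ∧ A.m y x = 0 ∧ A.m y y = α • y) := by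
  subst hx hy
  have hl := A.l_eq_coord_mul_coord_smul b h1 h2 h3 h4
  have hrx := Trias.r_basis_zero hl
  have hmx := Trias.m_basis_zero hl
  obtain ⟨f, hryx⟩ := Trias.exists_r_basis_one_eq_smul hl (b 0)
  obtain ⟨g, hryy⟩ := Trias.exists_r_basis_one_eq_smul hl (b 1)
  obtain ⟨p, hmyx⟩ := Trias.exists_m_basis_one_eq_smul hl (b 0)
  obtain ⟨q, hmyy⟩ := Trias.exists_m_basis_one_eq_smul hl (b 1)
  have cancel {c d : ℂ} (h : c • b 1 = d • b 1) : c = d :=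
    smul_left_injective ℂ (b.ne_zero 1) h
  have hf : IsIdempotentElem f :=
    cancel (by simpa [hryx, hrx, smul_smul] using A.A2 (b 1) (b 0) (b 0))
  have hg : g * g = 0 := cancel (by simpa [hryy, hl, smul_smul] using A.D2 (b 1) (b 1) (b 1))
  have hp : IsIdempotentElem p :=
    cancel (by simpa [hmyx, hmx, smul_smul] using A.A3 (b 1) (b 0) (b 0))
  have hpf : p * f = p :=
    cancel (by simpa [hmyx, hryx, hrx, smul_smul] using A.T4 (b 1) (b 0) (b 0))
  have hfq : f * q = 0 :=
    cancel (by simpa [hmyy, hryx, h2, smul_smul] using A.S2 (b 1) (b 0) (b 1))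
  have hg0 : g = 0 := mul_self_eq_zero.mp hg
  rcases IsIdempotentElem.iff_eq_zero_or_one.mp hf with rfl | rfl
  · have hp0 : p = 0 := by simpa using hpf.symm
    exact Or.inr <| Or.inr ⟨q, by simp [hrx, hmx, hryx, hryy, hmyx, hmyy, hg0, hp0]⟩
  · have hq0 : q = 0 := by simpa using hfq
    rcases IsIdempotentElem.iff_eq_zero_or_one.mp hp with rfl | rfl
    · exact Or.inr <| Or.inl <| by simp [hrx, hmx, hryx, hryy, hmyx, hmyy, hg0, hq0]
    · exact Or.inl <| by simp [hrx, hmx, hryx, hryy, hmyx, hmyy, hg0, hq0]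
end

section
/- For each α, β ∈ ℂ, the structure on ℂ² with basis {x,y} given by x⊢x = y, x⊣x = αy, x⊥x = βy (all other basis products zero) is a triassociative algebra (Trias₂²⁸). -/

noncomputable def triF (c : ℂ) : (ℂ × ℂ) →ₗ[ℂ] (ℂ × ℂ) →ₗ[ℂ] (ℂ × ℂ) :=
  LinearMap.mk₂ ℂ (fun p q => (0, c * (p.1 * q.1)))
    (by intro p p' q; simp [add_mul]; try ring)
    (by intro a p q; simp [Prod.smul_def]; try ring)
    (by intro p q q'; simp [mul_add]; try ring)
    (by intro a p q; simp [Prod.smul_def]; try ring)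

@[simp] lemma triF_apply (c : ℂ) (p q : ℂ × ℂ) : triF c p q = (0, c * (p.1 * q.1)) := rfl

/-- For each `α, β ∈ ℂ`, the structure on `ℂ²` with basis `x = (1,0)`,
`y = (0,1)` given by `x⊢x = y`, `x⊣x = α•y`, `x⊥x = β•y` (all other basis
products zero) is a triassociative algebra (`Trias₂²⁸`). -/
theorem stmt15 (α β : ℂ) :
    ∃ A : Trias (ℂ × ℂ),
      A.l (1,0) (1,0) = (0,1) ∧ A.l (1,0) (0,1) = 0 ∧
      A.l (0,1) (1,0) = 0 ∧ A.l (0,1) (0,1) = 0 ∧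
      A.r (1,0) (1,0) = α • ((0 : ℂ), (1 : ℂ)) ∧ A.r (1,0) (0,1) = 0 ∧
      A.r (0,1) (1,0) = 0 ∧ A.r (0,1) (0,1) = 0 ∧
      A.m (1,0) (1,0) = β • ((0 : ℂ), (1 : ℂ)) ∧ A.m (1,0) (0,1) = 0 ∧
      A.m (0,1) (1,0) = 0 ∧ A.m (0,1) (0,1) = 0 := by
  refine ⟨⟨triF 1, triF α, triF β, ?_, ?_, ?_, ?_, ?_, ?_, ?_, ?_, ?_, ?_, ?_⟩, ?_⟩ <;>
    simp [Prod.ext_iff, Prod.smul_def]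
end

section
/- The structure on ℂ² with basis {x,y} given by x⊢x = x, x⊢y = y⊢x = y, x⊣x = x, x⊣y = y⊣x = y, x⊥x = x, x⊥y = y⊥x = y (all other basis products zero) is a triassociative algebra (Trias₂⁴¹). -/
noncomputable def dualMul : (ℂ × ℂ) →ₗ[ℂ] (ℂ × ℂ) →ₗ[ℂ] (ℂ × ℂ) :=
  LinearMap.mk₂ ℂ (fun a b => (a.1 * b.1, a.1 * b.2 + a.2 * b.1))
    (by intro a b c; simp [Prod.ext_iff]; ring_nf; simp [add_comm, add_assoc, add_left_comm])
    (by intro s a b; simp [Prod.ext_iff]; constructor <;> ring)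
    (by intro a b c; simp [Prod.ext_iff]; ring_nf; simp [add_comm, add_assoc, add_left_comm])
    (by intro s a b; simp [Prod.ext_iff]; constructor <;> ring)

lemma dualMul_assoc : ∀ x y z, dualMul (dualMul x y) z = dualMul x (dualMul y z) := by
  intro x y z
  simp [dualMul, Prod.ext_iff]
  constructor <;> ring

/-- The structure on `ℂ²` with basis `x = (1,0)`, `y = (0,1)` given by
`x⊢x = x`, `x⊢y = y⊢x = y`, `x⊣x = x`, `x⊣y = y⊣x = y`, `x⊥x = x`,
`x⊥y = y⊥x = y` (all other basis products zero) is a triassociative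
algebra (`Trias₂⁴¹`). -/
theorem stmt16 :
    ∃ A : Trias (ℂ × ℂ),
      A.l (1,0) (1,0) = (1,0) ∧ A.l (1,0) (0,1) = (0,1) ∧
      A.l (0,1) (1,0) = (0,1) ∧ A.l (0,1) (0,1) = 0 ∧
      A.r (1,0) (1,0) = (1,0) ∧ A.r (1,0) (0,1) = (0,1) ∧
      A.r (0,1) (1,0) = (0,1) ∧ A.r (0,1) (0,1) = 0 ∧
      A.m (1,0) (1,0) = (1,0) ∧ A.m (1,0) (0,1) = (0,1) ∧
      A.m (0,1) (1,0) = (0,1) ∧ A.m (0,1) (0,1) = 0 := by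
  refine ⟨⟨dualMul, dualMul, dualMul, dualMul_assoc, dualMul_assoc, dualMul_assoc,
    dualMul_assoc, dualMul_assoc, dualMul_assoc, dualMul_assoc, dualMul_assoc,
    dualMul_assoc, dualMul_assoc, dualMul_assoc⟩, ?_⟩
  refine ⟨?_, ?_, ?_, ?_, ?_, ?_, ?_, ?_, ?_, ?_, ?_, ?_⟩ <;>
    simp [dualMul, Prod.ext_iff]
end

section
/- For each α ∈ ℂ, the structure on ℂ² with basis {x,y} given by y⊣y = x and y⊥y = αx (all other basis products zero, ⊢ identically zero) is a triassociative algebra (Trias₂¹⁹). -/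
/-- Auxiliary bilinear map `(a, b) ↦ (c * a.2 * b.2, 0)` on `ℂ²`. -/
def bil (c : ℂ) : (ℂ × ℂ) →ₗ[ℂ] (ℂ × ℂ) →ₗ[ℂ] (ℂ × ℂ) :=
  LinearMap.mk₂ ℂ (fun a b => (c * a.2 * b.2, 0))
    (by intros; simp [Prod.ext_iff]; ring)
    (by intros; simp [Prod.ext_iff]; ring)
    (by intros; simp [Prod.ext_iff]; ring)
    (by intros; simp [Prod.ext_iff]; ring)

/-- For each `α ∈ ℂ`, the structure on `ℂ²` with basis `x = (1,0)`,
`y = (0,1)` given by `y⊣y = x`, `y⊥y = α•x` (all other basis products zero,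
`⊢` identically zero) is a triassociative algebra (`Trias₂¹⁹`). -/
theorem stmt19 (α : ℂ) :
    ∃ A : Trias (ℂ × ℂ),
      (∀ a b : ℂ × ℂ, A.l a b = 0) ∧
      A.r (1,0) (1,0) = 0 ∧ A.r (1,0) (0,1) = 0 ∧
      A.r (0,1) (1,0) = 0 ∧ A.r (0,1) (0,1) = (1,0) ∧
      A.m (1,0) (1,0) = 0 ∧ A.m (1,0) (0,1) = 0 ∧
      A.m (0,1) (1,0) = 0 ∧ A.m (0,1) (0,1) = α • ((1 : ℂ), (0 : ℂ)) := by
  refine ⟨⟨0, bil 1, bil α, ?_, ?_, ?_, ?_, ?_, ?_, ?_, ?_, ?_, ?_, ?_⟩, ?_, ?_, ?_, ?_, ?_, ?_, ?_, ?_, ?_⟩ <;>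
    intros <;> simp [bil, Prod.ext_iff] <;> ring
end
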